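/- With the same setup, for any β ∈ ℝ^σ the generalized canonical equilibrium set decomposes into microcanonical equilibrium sets: H̃(𝓔(g)_β) ⊆ dom s and 𝓔(g)_β = ⋃_{u ∈ H̃(𝓔(g)_β)} 𝓔^u. -/

import Mathlib

open scoped RealInnerProductSpace

/-- The microcanonical entropy `s(u) = -inf{I(x) : H̃(x) = u}`. -/
noncomputable def microEntropy {σ : ℕ} {X : Type*} (I : X → EReal)
    (H : X → EuclideanSpace ℝ (Fin σ)) (u : EuclideanSpace ℝ (Fin σ)) : EReal :=
  -sInf (I '' {x | H x = u})

/-- The set `𝓔^u` of microcanonical equilibrium macrostates: minimizers of `I`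
subject to `H̃(x) = u`. -/
def microEquilibrium {σ : ℕ} {X : Type*} (I : X → EReal)
    (H : X → EuclideanSpace ℝ (Fin σ)) (u : EuclideanSpace ℝ (Fin σ)) : Set X :=
  {x | H x = u ∧ ∀ y, H y = u → I x ≤ I y}

/-- The set `𝓔(g)_β` of generalized canonical equilibrium macrostates: minimizers
of `I(x) + ⟨β, H̃(x)⟩ + g(H̃(x))`. -/
def genCanonEquilibrium {σ : ℕ} {X : Type*} (I : X → EReal)
    (H : X → EuclideanSpace ℝ (Fin σ)) (g : EuclideanSpace ℝ (Fin σ) → ℝ)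
    (β : EuclideanSpace ℝ (Fin σ)) : Set X :=
  {x | ∀ y, I x + ((⟪β, H x⟫ + g (H x) : ℝ) : EReal) ≤
    I y + ((⟪β, H y⟫ + g (H y) : ℝ) : EReal)}

/-!
The canonical objective `I x + ⟨β, H̃ x⟩ + g (H̃ x)` depends on `x` only through `I x` and the
macrostate `H̃ x`. So on each fibre `{H̃ = u}` a canonical minimizer minimizes `I` itself, and
conversely any minimizer of `I` on the fibre of a canonical minimizer attains the same minimal
value. Since `I` is finite somewhere, canonical minimizers have finite `I`, so `s > -∞` at their
macrostates.
-/

section Equilibrium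

variable {σ : ℕ} {X : Type*} {I : X → EReal} {H : X → EuclideanSpace ℝ (Fin σ)}
  {g : EuclideanSpace ℝ (Fin σ) → ℝ} {β : EuclideanSpace ℝ (Fin σ)}

theorem microEntropy_ne_bot_of_ne_top {x : X} (hx : I x ≠ ⊤) : microEntropy I H (H x) ≠ ⊥ := by
  have hle : sInf (I '' {y | H y = H x}) ≤ I x := sInf_le ⟨x, rfl, rfl⟩
  rw [microEntropy, ne_eq, EReal.neg_eq_bot_iff]
  exact fun htop => hx (top_le_iff.1 (htop ▸ hle))

theorem ne_top_of_mem_genCanonEquilibrium (hfin : ∃ x, I x ≠ ⊤) {x : X}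
    (hx : x ∈ genCanonEquilibrium I H g β) : I x ≠ ⊤ := by
  obtain ⟨x₀, hx₀⟩ := hfin
  intro htop
  have h := hx x₀
  rw [htop, EReal.top_add_coe, top_le_iff] at h
  exact EReal.add_ne_top hx₀ (EReal.coe_ne_top _) h

theorem mem_microEquilibrium_of_mem_genCanonEquilibrium {x : X}
    (hx : x ∈ genCanonEquilibrium I H g β) : x ∈ microEquilibrium I H (H x) := by
  refine ⟨rfl, fun y hy => ?_⟩
  have h := hx y
  rw [hy] at h
  exact (EReal.addLECancellable_coe _).add_le_add_iff_right.1 h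

theorem mem_genCanonEquilibrium_of_mem_microEquilibrium {x z : X}
    (hz : z ∈ genCanonEquilibrium I H g β) (hx : x ∈ microEquilibrium I H (H z)) :
    x ∈ genCanonEquilibrium I H g β := by
  obtain ⟨hxz, hmin⟩ := hx
  intro y
  calc I x + ((⟪β, H x⟫ + g (H x) : ℝ) : EReal)
      = I x + ((⟪β, H z⟫ + g (H z) : ℝ) : EReal) := by rw [hxz]
    _ ≤ I z + ((⟪β, H z⟫ + g (H z) : ℝ) : EReal) := add_le_add_left (hmin z rfl) _
    _ ≤ _ := hz y

end Equilibrium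

theorem genCanon_realized_microcanonically_general
    (σ : ℕ) (X : Type*)
    (I : X → EReal)
    (hI0 : ∃ x, I x = 0)
    (H : X → EuclideanSpace ℝ (Fin σ))
    (g : EuclideanSpace ℝ (Fin σ) → ℝ)
    (β : EuclideanSpace ℝ (Fin σ)) :
    (H '' genCanonEquilibrium I H g β ⊆ {v | microEntropy I H v ≠ ⊥}) ∧
      genCanonEquilibrium I H g β =
        ⋃ u ∈ H '' genCanonEquilibrium I H g β, microEquilibrium I H u := by
  obtain ⟨x₀, hx₀⟩ := hI0
  have hfin : ∃ x, I x ≠ ⊤ := ⟨x₀, hx₀ ▸ EReal.zero_ne_top⟩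
  refine ⟨?_, Set.Subset.antisymm ?_ ?_⟩
  · rintro _ ⟨x, hx, rfl⟩
    exact microEntropy_ne_bot_of_ne_top (ne_top_of_mem_genCanonEquilibrium hfin hx)
  · exact fun x hx => Set.mem_biUnion (Set.mem_image_of_mem H hx)
      (mem_microEquilibrium_of_mem_genCanonEquilibrium hx)
  · simp only [Set.iUnion_subset_iff, Set.forall_mem_image]
    exact fun z hz x hx => mem_genCanonEquilibrium_of_mem_microEquilibrium hz hx

/-- the generalized canonical equilibrium set decomposes into
microcanonical equilibrium sets: `H̃(𝓔(g)_β) ⊆ dom s` and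
`𝓔(g)_β = ⋃_{u ∈ H̃(𝓔(g)_β)} 𝓔^u`. -/
theorem genCanon_realized_microcanonically
    (σ : ℕ) (X : Type*) [MetricSpace X]
    (I : X → EReal) (hIpos : ∀ x, 0 ≤ I x) (hIlsc : LowerSemicontinuous I)
    (hIcpt : ∀ c : ℝ, IsCompact {x | I x ≤ ((c : ℝ) : EReal)})
    (hI0 : ∃ x, I x = 0)
    (H : X → EuclideanSpace ℝ (Fin σ)) (hH : Continuous H)
    (hHb : ∃ C : ℝ, ∀ x, ‖H x‖ ≤ C)
    (g : EuclideanSpace ℝ (Fin σ) → ℝ) (hg : Continuous g)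
    (β : EuclideanSpace ℝ (Fin σ))
    (hne : (genCanonEquilibrium I H g β).Nonempty) :
    (H '' genCanonEquilibrium I H g β ⊆ {v | microEntropy I H v ≠ ⊥}) ∧
      genCanonEquilibrium I H g β =
        ⋃ u ∈ H '' genCanonEquilibrium I H g β, microEquilibrium I H u :=
  genCanon_realized_microcanonically_general σ X I hI0 H g β
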